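/- For a Banach lattice E, every super weakly precompact subset of E is a limited set if and only if every disjoint weakly null sequence in E is limited, and this holds if and only if every weak*-null sequence in E′ is an almost L-sequence. -/

import Mathlib

open Filter Topology ZeroAtInfty Set Bornology

noncomputable section

section Defs

variable {E F X : Type*}

/-- Two elements of a lattice group are (lattice) disjoint. -/
def LatDisjoint [Lattice E] [AddCommGroup E] (x y : E) : Prop := |x| ⊓ |y| = 0

/-- A pairwise disjoint sequence. -/
def DisjointSeq [Lattice E] [AddCommGroup E] (x : ℕ → E) : Prop :=
  ∀ m n, m ≠ n → LatDisjoint (x m) (x n)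

variable [NormedAddCommGroup X] [NormedSpace ℝ X]

/-- A weakly null sequence in a normed space. -/
def WeaklyNull (x : ℕ → X) : Prop :=
  ∀ f : X →L[ℝ] ℝ, Tendsto (fun n => f (x n)) atTop (𝓝 0)

/-- A weakly Cauchy sequence. -/
def WeaklyCauchy (x : ℕ → X) : Prop :=
  ∀ f : X →L[ℝ] ℝ, ∃ l : ℝ, Tendsto (fun n => f (x n)) atTop (𝓝 l)

/-- A weakly precompact set: every sequence has a weakly Cauchy subsequence. -/
def WeaklyPrecompactSet (A : Set X) : Prop :=
  ∀ x : ℕ → X, (∀ n, x n ∈ A) → ∃ φ : ℕ → ℕ, StrictMono φ ∧ WeaklyCauchy (x ∘ φ)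

/-- A relatively weakly compact set: closure in the weak topology is compact. -/
def RelWeaklyCompact (A : Set X) : Prop :=
  IsCompact (closure ((toWeakSpace ℝ X) '' A))

/-- A weakly sequentially complete space. -/
def WeaklySeqComplete (X : Type*) [NormedAddCommGroup X] [NormedSpace ℝ X] : Prop :=
  ∀ x : ℕ → X, WeaklyCauchy x → ∃ l : X, ∀ f : X →L[ℝ] ℝ,
    Tendsto (fun n => f (x n)) atTop (𝓝 (f l))

/-- A weak*-null sequence of functionals. -/
def WeakStarNull (f : ℕ → X →L[ℝ] ℝ) : Prop :=
  ∀ x : X, Tendsto (fun n => f n x) atTop (𝓝 0)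

/-- A sequence of functionals converges uniformly to zero on a set `A`. -/
def UnifZeroOn (f : ℕ → X →L[ℝ] ℝ) (A : Set X) : Prop :=
  ∀ ε > (0:ℝ), ∃ N : ℕ, ∀ n ≥ N, ∀ x ∈ A, |f n x| < ε

/-- A limited set. -/
def LimitedSet (A : Set X) : Prop :=
  IsBounded A ∧ ∀ f : ℕ → X →L[ℝ] ℝ, WeakStarNull f → UnifZeroOn f A

variable [NormedAddCommGroup E] [Lattice E] [IsOrderedAddMonoid E] [HasSolidNorm E] [NormedSpace ℝ E]
  [NormedAddCommGroup F] [Lattice F] [IsOrderedAddMonoid F] [HasSolidNorm F] [NormedSpace ℝ F]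

/-- An almost Dunford–Pettis operator: sends disjoint weakly null sequences to norm null ones. -/
def AlmostDP (T : E →L[ℝ] X) : Prop :=
  ∀ x : ℕ → E, DisjointSeq x → WeaklyNull x → Tendsto (fun n => ‖T (x n)‖) atTop (𝓝 0)

/-- A Dunford–Pettis operator: sends weakly null sequences to norm null ones. -/
def DunfordPettisOp (T : E →L[ℝ] X) : Prop :=
  ∀ x : ℕ → E, WeaklyNull x → Tendsto (fun n => ‖T (x n)‖) atTop (𝓝 0)

/-- An almost L-set in the dual: disjoint weakly null sequences of `E` converge to zero
uniformly on `B`. -/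
def AlmostLSet (B : Set (E →L[ℝ] ℝ)) : Prop :=
  IsBounded B ∧ ∀ x : ℕ → E, DisjointSeq x → WeaklyNull x →
    ∀ ε > (0:ℝ), ∃ N : ℕ, ∀ n ≥ N, ∀ f ∈ B, |f (x n)| < ε

/-- An almost L-sequence in the dual. -/
def AlmostLSeq (f : ℕ → E →L[ℝ] ℝ) : Prop := AlmostLSet (Set.range f)

/-- A super weakly precompact set: a bounded set mapped to a relatively compact subset of `c₀`
by every almost Dunford–Pettis operator. -/
def SuperWeaklyPrecompact (A : Set E) : Prop :=
  IsBounded A ∧ ∀ T : E →L[ℝ] C₀(ℕ, ℝ), AlmostDP T → IsCompact (closure (T '' A))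

/-- The solid hull of a set in a Banach lattice. -/
def SolidHull (A : Set E) : Set E := {y | ∃ x ∈ A, |y| ≤ |x|}

/-- An L-weakly compact set. -/
def LWeaklyCompact (A : Set E) : Prop :=
  IsBounded A ∧ ∀ x : ℕ → E, (∀ n, x n ∈ SolidHull A) → DisjointSeq x →
    Tendsto (fun n => ‖x n‖) atTop (𝓝 0)

/-- A disjointly weakly compact set. -/
def DisjointlyWeaklyCompact (A : Set E) : Prop :=
  IsBounded A ∧ ∀ x : ℕ → E, (∀ n, x n ∈ SolidHull A) → DisjointSeq x → WeaklyNull x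

/-- The positive Schur property. -/
def PositiveSchur (E : Type*) [NormedAddCommGroup E] [Lattice E] [IsOrderedAddMonoid E] [HasSolidNorm E] [NormedSpace ℝ E] : Prop :=
  ∀ x : ℕ → E, DisjointSeq x → WeaklyNull x → Tendsto (fun n => ‖x n‖) atTop (𝓝 0)

/-- `|f|(|x|)`, via the Riesz–Kantorovich formula `|f|(|x|) = sup {f y : |y| ≤ |x|}`. -/
def pabs (f : E →L[ℝ] ℝ) (x : E) : ℝ := sSup ((fun y => f y) '' {y : E | |y| ≤ |x|})

/-- Totally bounded for the absolute weak topology `|σ|(E,E')` generated by the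
seminorms `x ↦ |f|(|x|)`. -/
def AWTotallyBounded (A : Set E) : Prop :=
  ∀ ε > (0:ℝ), ∀ s : Finset (E →L[ℝ] ℝ), ∃ Φ : Finset E, ↑Φ ⊆ A ∧
    ∀ x ∈ A, ∃ y ∈ Φ, ∀ f ∈ s, pabs f (x - y) < ε

/-- Pointwise order on the dual: `f ≤ g` iff `f x ≤ g x` for all `x ≥ 0`. -/
def dualLe (f g : E →L[ℝ] ℝ) : Prop := ∀ x : E, 0 ≤ x → f x ≤ g x

/-- Order bounded operator: maps order intervals into order intervals. -/
def OrderBoundedOp (T : E →L[ℝ] F) : Prop :=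
  ∀ a b : E, ∃ c d : F, T '' Set.Icc a b ⊆ Set.Icc c d

/-- PL-compact operator: the image of the closed unit ball is `|σ|(F,F')`-totally bounded. -/
def PLCompact (T : E →L[ℝ] F) : Prop :=
  AWTotallyBounded (T '' Metric.closedBall 0 1)

/-- AMAL-compact operator: the image of every order interval is `|σ|(F,F')`-totally bounded. -/
def AMALCompact (T : E →L[ℝ] F) : Prop :=
  ∀ x : E, 0 ≤ x → AWTotallyBounded (T '' Set.Icc (-x) x)

/-- The dual norm is order continuous: `‖f_α‖ → 0` for every decreasing net `f_α ↓ 0`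
of positive functionals. -/
def DualOrderContinuousNorm (E : Type*) [NormedAddCommGroup E] [Lattice E] [IsOrderedAddMonoid E] [HasSolidNorm E] [NormedSpace ℝ E] : Prop :=
  ∀ (ι : Type) (_ : Preorder ι) (_ : Nonempty ι),
    (∀ i j : ι, ∃ k, i ≤ k ∧ j ≤ k) → ∀ f : ι → E →L[ℝ] ℝ,
    (∀ i j, i ≤ j → dualLe (f j) (f i)) →
    (∀ i, dualLe 0 (f i)) →
    (∀ g, (∀ i, dualLe g (f i)) → dualLe g 0) →
    Tendsto (fun i => ‖f i‖) atTop (𝓝 0)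

/-- An atom of the dual lattice: a positive nonzero functional such that any two disjoint
positive functionals below it cannot both be nonzero. -/
def DualAtom (a : E →L[ℝ] ℝ) : Prop :=
  dualLe 0 a ∧ a ≠ 0 ∧
  ∀ b c : E →L[ℝ] ℝ, dualLe 0 b → dualLe b a → dualLe 0 c → dualLe c a →
    (∀ x : E, 0 ≤ x → ∀ ε > (0:ℝ), ∃ y : E, 0 ≤ y ∧ y ≤ x ∧ b y + c (x - y) < ε) →
    b = 0 ∨ c = 0

/-- `|f|` is disjoint from the positive functional `a`, i.e. `(|f| ⊓ a)(x) = 0` for `x ≥ 0`. -/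
def dualAbsDisjoint (f a : E →L[ℝ] ℝ) : Prop :=
  ∀ x : E, 0 ≤ x → ∀ ε > (0:ℝ), ∃ y : E, 0 ≤ y ∧ y ≤ x ∧ pabs f y + a (x - y) < ε

/-- The dual Banach lattice is discrete: the band generated by its atoms is everything,
i.e. the disjoint complement of the set of atoms is trivial. -/
def DualDiscrete (E : Type*) [NormedAddCommGroup E] [Lattice E] [IsOrderedAddMonoid E] [HasSolidNorm E] [NormedSpace ℝ E] : Prop :=
  ∀ f : E →L[ℝ] ℝ, (∀ a : E →L[ℝ] ℝ, DualAtom a → dualAbsDisjoint f a) → f = 0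

/-- The absolute weak* topology `|σ|(E',E)` on the dual, generated by the
seminorms `f ↦ |f|(|x|)`. -/
def awStarTop (E : Type*) [NormedAddCommGroup E] [Lattice E] [IsOrderedAddMonoid E] [HasSolidNorm E] [NormedSpace ℝ E] :
    TopologicalSpace (E →L[ℝ] ℝ) :=
  ⨅ x : E, TopologicalSpace.induced (fun f => pabs f x) inferInstance

end Defs

/-! For a weak*-null `(fₘ)` in `E′` and a weakly null `(xₙ)` in `E`, the double sequence `fₘ(xₙ)`
tends to `0` in each index separately; then uniform convergence in `n` as `m → ∞` is equivalent to
uniform convergence in `m` as `n → ∞`, because only finitely many rows (or columns) can stay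
`ε`-large. This symmetry is the equivalence of the last two conditions.

The range of a disjoint weakly null sequence is super weakly precompact, since an almost
Dunford–Pettis operator maps it to a norm-null sequence. Conversely, a weak*-null `(fₘ)` gives the
operator `v ↦ (fₘ v)ₘ` into `c₀`, which is almost Dunford–Pettis when disjoint weakly null
sequences are limited; relative compactness in `c₀` of the image of `A` means that the coordinates
tend to `0` uniformly on it, i.e. `fₘ → 0` uniformly on `A`. -/

theorem TendstoUniformly.swap_of_cofinite {ι α β : Type*} [UniformSpace β] {F : ι → α → β}
    {c : β} {p : Filter α} (h : TendstoUniformly F (fun _ => c) cofinite)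
    (hF : ∀ i, Tendsto (F i) p (𝓝 c)) :
    TendstoUniformly (fun a i => F i a) (fun _ => c) p := by
  intro U hU
  have hbad : {i | ¬ ∀ a, (c, F i a) ∈ U}.Finite := h U hU
  filter_upwards [hbad.eventually_all.2 fun i _ => hF i (UniformSpace.ball_mem_nhds c hU)]
    with a ha i
  by_cases hi : ∀ a, (c, F i a) ∈ U
  · exact hi a
  · exact ha i hi

theorem IsCompact.tendstoUniformlyOn_apply_zero {α β : Type*} [TopologicalSpace α]
    [NormedAddCommGroup β] {K : Set C₀(α, β)} (hK : IsCompact K) :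
    TendstoUniformlyOn (fun a (g : C₀(α, β)) => g a) 0 (cocompact α) K := by
  rw [Metric.tendstoUniformlyOn_iff]
  intro ε hε
  obtain ⟨t, -, htfin, hKt⟩ := finite_cover_balls_of_compact hK (half_pos hε)
  have hsmall : ∀ᶠ a in cocompact α, ∀ h ∈ t, h a ∈ Metric.ball 0 (ε / 2) :=
    htfin.eventually_all.2 fun h _ =>
      (zero_at_infty h).eventually (Metric.ball_mem_nhds 0 (half_pos hε))
  filter_upwards [hsmall] with a ha g hg
  obtain ⟨h, ht, hgh⟩ := mem_iUnion₂.1 (hKt hg)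
  have hdist : dist (g a) (h a) ≤ dist g h := by
    rw [← ZeroAtInftyContinuousMap.dist_toBCF_eq_dist]
    exact BoundedContinuousFunction.dist_coe_le_dist (f := g.toBCF) (g := h.toBCF) a
  calc _ = ‖g a‖ := by simp
    _ ≤ dist (g a) (h a) + ‖h a‖ := by simpa [dist_eq_norm] using norm_le_norm_sub_add (g a) (h a)
    _ < ε / 2 + ε / 2 := add_lt_add_of_le_of_lt (hdist.trans (Metric.mem_ball.1 hgh).le)
      (mem_ball_zero_iff.1 (ha h ht))
    _ = ε := add_halves ε

section NormedSpace

variable {X : Type*} [NormedAddCommGroup X] [NormedSpace ℝ X]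

theorem WeakStarNull.isBounded_range [CompleteSpace X] {f : ℕ → X →L[ℝ] ℝ}
    (hf : WeakStarNull f) : IsBounded (range f) := by
  refine isBounded_iff_forall_norm_le.2 <|
    (banach_steinhaus fun v => ?_).imp fun C hC => forall_mem_range.2 hC
  obtain ⟨C, hC⟩ := isBounded_iff_forall_norm_le.1 (Metric.isBounded_range_of_tendsto _ (hf v))
  exact ⟨C, fun n => hC _ ⟨n, rfl⟩⟩

theorem WeaklyNull.isBounded_range {x : ℕ → X} (hx : WeaklyNull x) : IsBounded (range x) := by
  refine isBounded_iff_forall_norm_le.2 <|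
    (banach_steinhaus (g := fun n => NormedSpace.inclusionInDoubleDualLi ℝ (x n)) fun φ => ?_).imp
      fun C hC => forall_mem_range.2 fun n => ?_
  · obtain ⟨C, hC⟩ := isBounded_iff_forall_norm_le.1 (Metric.isBounded_range_of_tendsto _ (hx φ))
    exact ⟨C, fun n => hC _ ⟨n, rfl⟩⟩
  · exact (NormedSpace.inclusionInDoubleDualLi ℝ).norm_map (x n) ▸ hC n

theorem unifZeroOn_iff_tendstoUniformlyOn {f : ℕ → X →L[ℝ] ℝ} {A : Set X} :
    UnifZeroOn f A ↔ TendstoUniformlyOn (fun n v => f n v) 0 atTop A := by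
  simp only [UnifZeroOn, Metric.tendstoUniformlyOn_iff, eventually_atTop, Pi.zero_apply,
    dist_zero_left, Real.norm_eq_abs]

theorem unifZeroOn_range_iff {f : ℕ → X →L[ℝ] ℝ} {x : ℕ → X} :
    UnifZeroOn f (range x) ↔ TendstoUniformly (fun m n => f m (x n)) 0 atTop := by
  simp only [UnifZeroOn, Metric.tendstoUniformly_iff, eventually_atTop, forall_mem_range,
    Pi.zero_apply, dist_zero_left, Real.norm_eq_abs]

theorem tendstoUniformly_swap_iff {f : ℕ → X →L[ℝ] ℝ} {x : ℕ → X} (hf : WeakStarNull f)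
    (hx : WeaklyNull x) :
    TendstoUniformly (fun m n => f m (x n)) 0 atTop ↔
      TendstoUniformly (fun n m => f m (x n)) 0 atTop := by
  refine ⟨fun h => ?_, fun h => ?_⟩ <;> rw [← Nat.cofinite_eq_atTop] at h
  exacts [h.swap_of_cofinite fun m => hx (f m), h.swap_of_cofinite fun n => hf (x n)]

theorem limitedSet_range_iff {x : ℕ → X} (hx : WeaklyNull x) :
    LimitedSet (range x) ↔
      ∀ f : ℕ → X →L[ℝ] ℝ, WeakStarNull f → TendstoUniformly (fun n m => f m (x n)) 0 atTop := by
  simp only [LimitedSet, hx.isBounded_range, true_and, unifZeroOn_range_iff]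
  exact forall₂_congr fun f hf => tendstoUniformly_swap_iff hf hx

def WeakStarNull.toC₀ [CompleteSpace X] {f : ℕ → X →L[ℝ] ℝ} (hf : WeakStarNull f) :
    X →L[ℝ] C₀(ℕ, ℝ) :=
  LinearMap.mkContinuousOfExistsBound
    { toFun := fun v =>
        ⟨⟨fun n => f n v, continuous_of_discreteTopology⟩, by rw [cocompact_eq_atTop]; exact hf v⟩
      map_add' := fun v w => by ext n; simp
      map_smul' := fun c v => by ext n; simp } <| by
    obtain ⟨C, hC⟩ := isBounded_iff_forall_norm_le.1 hf.isBounded_range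
    have hC0 : 0 ≤ C := (norm_nonneg _).trans (hC _ ⟨0, rfl⟩)
    refine ⟨C, fun v => ?_⟩
    rw [← ZeroAtInftyContinuousMap.norm_toBCF_eq_norm]
    refine (BoundedContinuousFunction.norm_le (by positivity)).2 fun n => ?_
    exact (f n).le_of_opNorm_le (hC _ ⟨n, rfl⟩) v

end NormedSpace

section BanachLattice

variable {E : Type*} [NormedAddCommGroup E] [Lattice E] [NormedSpace ℝ E]

theorem almostLSeq_iff {f : ℕ → E →L[ℝ] ℝ} :
    AlmostLSeq f ↔ IsBounded (range f) ∧ ∀ x : ℕ → E, DisjointSeq x → WeaklyNull x →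
      TendstoUniformly (fun n m => f m (x n)) 0 atTop := by
  simp only [AlmostLSeq, AlmostLSet, Metric.tendstoUniformly_iff, eventually_atTop,
    forall_mem_range, Pi.zero_apply, dist_zero_left, Real.norm_eq_abs]

theorem superWeaklyPrecompact_range {x : ℕ → E} (hd : DisjointSeq x) (hx : WeaklyNull x) :
    SuperWeaklyPrecompact (range x) := by
  refine ⟨hx.isBounded_range, fun T hT => ?_⟩
  have hcompact := (tendsto_zero_iff_norm_tendsto_zero.2 (hT x hd hx)).isCompact_insert_range
  rw [← range_comp]
  exact hcompact.of_isClosed_subset isClosed_closure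
    (closure_minimal (subset_insert _ _) hcompact.isClosed)

theorem WeakStarNull.almostDP_toC₀ [CompleteSpace E]
    (h : ∀ x : ℕ → E, DisjointSeq x → WeaklyNull x → LimitedSet (range x))
    {f : ℕ → E →L[ℝ] ℝ} (hf : WeakStarNull f) : AlmostDP hf.toC₀ := by
  intro y hd hy
  rw [← tendsto_zero_iff_norm_tendsto_zero, ZeroAtInftyContinuousMap.tendsto_iff_tendstoUniformly]
  exact (limitedSet_range_iff hy).1 (h y hd hy) f hf

theorem SuperWeaklyPrecompact.limitedSet [CompleteSpace E]
    (h : ∀ x : ℕ → E, DisjointSeq x → WeaklyNull x → LimitedSet (range x))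
    {A : Set E} (hA : SuperWeaklyPrecompact A) : LimitedSet A := by
  refine ⟨hA.1, fun f hf => unifZeroOn_iff_tendstoUniformlyOn.2 ?_⟩
  have hT := (hA.2 _ (hf.almostDP_toC₀ h)).tendstoUniformlyOn_apply_zero.mono subset_closure
  rw [cocompact_eq_atTop] at hT
  exact (hT.comp hf.toC₀).mono (subset_preimage_image _ _)

theorem forall_limitedSet_range_iff_forall_almostLSeq [CompleteSpace E] :
    (∀ x : ℕ → E, DisjointSeq x → WeaklyNull x → LimitedSet (range x)) ↔
      ∀ f : ℕ → E →L[ℝ] ℝ, WeakStarNull f → AlmostLSeq f :=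
  ⟨fun h f hf => almostLSeq_iff.2
      ⟨hf.isBounded_range, fun x hd hx => (limitedSet_range_iff hx).1 (h x hd hx) f hf⟩,
    fun h x hd hx => (limitedSet_range_iff hx).2 fun f hf => (almostLSeq_iff.1 (h f hf)).2 x hd hx⟩

end BanachLattice

theorem stmt5_general {E : Type*} [NormedAddCommGroup E] [Lattice E] [NormedSpace ℝ E] [CompleteSpace E] :
    ((∀ A : Set E, SuperWeaklyPrecompact A → LimitedSet A) ↔
      (∀ x : ℕ → E, DisjointSeq x → WeaklyNull x → LimitedSet (Set.range x))) ∧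
    ((∀ x : ℕ → E, DisjointSeq x → WeaklyNull x → LimitedSet (Set.range x)) ↔
      (∀ f : ℕ → E →L[ℝ] ℝ, WeakStarNull f → AlmostLSeq f)) :=
  ⟨⟨fun h _ hd hx => h _ (superWeaklyPrecompact_range hd hx), fun h _ hA => hA.limitedSet h⟩,
    forall_limitedSet_range_iff_forall_almostLSeq⟩

theorem stmt5 {E : Type*} [NormedAddCommGroup E] [Lattice E] [IsOrderedAddMonoid E] [HasSolidNorm E] [NormedSpace ℝ E] [CompleteSpace E] :
    ((∀ A : Set E, SuperWeaklyPrecompact A → LimitedSet A) ↔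
      (∀ x : ℕ → E, DisjointSeq x → WeaklyNull x → LimitedSet (Set.range x))) ∧
    ((∀ x : ℕ → E, DisjointSeq x → WeaklyNull x → LimitedSet (Set.range x)) ↔
      (∀ f : ℕ → E →L[ℝ] ℝ, WeakStarNull f → AlmostLSeq f)) :=
  stmt5_general
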